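/- arXiv:nlin/0610073 — 4 statements merged into one kernel-verified Lean document; each statement's English description precedes it below -/
import Mathlib

section
/- For a polynomial f(λ) = f_1 λ^{g-1} + ... + f_g of degree less than g and distinct points λ_1, ..., λ_g, each coefficient satisfies f_n = -∑_{j=1}^g (f(λ_j)/β'(λ_j)) · (∂β_n/∂λ_j), where β_n is the n-th coefficient of β(λ) = ∏_{j=1}^g (λ - λ_j) = λ^g + β_1 λ^{g-1} + ... + β_g, viewed as a function of λ_1, ..., λ_g. -/
/-- The monic polynomial `β(λ) = ∏_{j} (λ - λ_j)` with the roots `λ_j` regarded as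
indeterminates; its coefficients `β_n = B.coeff (g - n)` are `(-1)^n` times elementary
symmetric polynomials. -/
noncomputable def betaP (F : Type*) [Field F] (g : ℕ) :
    Polynomial (MvPolynomial (Fin g) F) :=
  ∏ l : Fin g, (Polynomial.X - Polynomial.C (MvPolynomial.X l))

/-!
Lagrange interpolation at the nodes `λ_j` writes `f = ∑_j f(λ_j)/β'(λ_j) · β/(λ - λ_j)`.
On the other hand `β = (λ - λ_j) · ∏_{l ≠ j} (λ - λ_l)` with the second factor free of `λ_j`,
so `∂β/∂λ_j = -β/(λ - λ_j)` coefficientwise. Comparing coefficients of `λ^{g-n}` gives the claim.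
-/

open Polynomial Finset

namespace Lagrange

variable {F ι : Type*} [Field F] [DecidableEq ι] {s : Finset ι} {v : ι → F}

theorem eq_sum_C_mul_nodal_erase (hvs : Set.InjOn v s) {f : F[X]} (hf : f.degree < #s) :
    f = ∑ i ∈ s, C (f.eval (v i) / (derivative (nodal s v)).eval (v i)) *
      nodal (s.erase i) v := by
  conv_lhs => rw [eq_interpolate hvs hf, interpolate_eq_nodalWeight_mul_nodal_div_X_sub_C]
  refine sum_congr rfl fun i hi => ?_
  rw [← nodal_erase_eq_nodal_div hi, nodalWeight_eq_eval_derivative_nodal hi, div_eq_mul_inv,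
    C_mul, mul_comm (C (f.eval (v i))), mul_right_comm]

end Lagrange

namespace MvPolynomial

variable {R σ : Type*}

theorem pderiv_coeff_eq_zero_of_mem_lifts [CommSemiring R] {j : σ} {p : (MvPolynomial σ R)[X]}
    (hp : p ∈ lifts (supported R {j}ᶜ).val.toRingHom) (k : ℕ) : pderiv j (p.coeff k) = 0 := by
  obtain ⟨c, hc⟩ := (lifts_iff_coeff_lifts p).1 hp k
  rw [← hc]
  exact pderiv_eq_zero_of_notMem_vars fun h => mem_supported.1 c.2 h rfl

variable [CommRing R]

theorem pderiv_coeff_prod_X_sub_C_X [DecidableEq σ] {s : Finset σ} {j : σ} (hj : j ∈ s) (k : ℕ) :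
    pderiv j ((∏ l ∈ s, (Polynomial.X - Polynomial.C (X l) : (MvPolynomial σ R)[X])).coeff k) =
      -(∏ l ∈ s.erase j, (Polynomial.X - Polynomial.C (X l) : (MvPolynomial σ R)[X])).coeff k := by
  set Q := ∏ l ∈ s.erase j, (Polynomial.X - Polynomial.C (X l) : (MvPolynomial σ R)[X])
  have hQ : Q ∈ lifts (supported R {j}ᶜ).val.toRingHom := by
    refine prod_mem fun l hl => (lifts_iff_liftsRing _ _).2 <| sub_mem ?_ ?_
    · exact (lifts_iff_liftsRing _ _).1 (X_mem_lifts _)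
    · have hl : X l ∈ supported R ({j}ᶜ : Set σ) := Algebra.subset_adjoin <|
        Set.mem_image_of_mem X (Set.mem_compl_singleton_iff.2 (ne_of_mem_erase hl))
      exact (lifts_iff_liftsRing _ _).1 (C_mem_lifts _ (⟨X l, hl⟩ : supported R ({j}ᶜ : Set σ)))
  have hXQ : pderiv j ((Polynomial.X * Q).coeff k) = 0 :=
    pderiv_coeff_eq_zero_of_mem_lifts (mul_mem (X_mem_lifts _) hQ) k
  rw [← mul_prod_erase s _ hj, sub_mul, Polynomial.coeff_sub, map_sub, hXQ, Polynomial.coeff_C_mul,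
    Derivation.leibniz, pderiv_coeff_eq_zero_of_mem_lifts hQ, pderiv_X_self]
  simp [Q]

theorem eval_coeff_prod_X_sub_C_X (s : Finset σ) (x : σ → R) (k : ℕ) :
    eval x ((∏ l ∈ s, (Polynomial.X - Polynomial.C (X l) : (MvPolynomial σ R)[X])).coeff k) =
      (Lagrange.nodal s x).coeff k := by
  rw [← Polynomial.coeff_map, Polynomial.map_prod, Lagrange.nodal]
  simp

end MvPolynomial

theorem coeff_eq_neg_sum_pderiv_general (F : Type*) [Field F] (g : ℕ)
    (lam : Fin g → F) (hlam : Function.Injective lam)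
    (f : Polynomial F) (hf : f.degree < (g : WithBot ℕ))
    (n : ℕ) :
    f.coeff (g - n) =
      -∑ j : Fin g,
        f.eval (lam j) /
            (Polynomial.derivative
              (∏ l : Fin g, (Polynomial.X - Polynomial.C (lam l)))).eval (lam j) *
          MvPolynomial.eval lam
            (MvPolynomial.pderiv j ((betaP F g).coeff (g - n))) := by
  classical
  have hf' : f.degree < #(univ : Finset (Fin g)) := by rwa [card_univ, Fintype.card_fin]
  conv_lhs => rw [Lagrange.eq_sum_C_mul_nodal_erase hlam.injOn hf']
  rw [finsetSum_coeff, ← sum_neg_distrib]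
  refine sum_congr rfl fun j _ => ?_
  rw [coeff_C_mul, betaP, MvPolynomial.pderiv_coeff_prod_X_sub_C_X (mem_univ j), map_neg,
    MvPolynomial.eval_coeff_prod_X_sub_C_X, Lagrange.nodal, mul_neg, neg_neg]

/-- for a polynomial `f(λ) = f_1 λ^{g-1} + ⋯ + f_g` of degree `< g` and
distinct points `λ_1, …, λ_g` in a field of characteristic zero,
`f_n = -∑_j (f(λ_j)/β'(λ_j)) · ∂β_n/∂λ_j`. -/
theorem coeff_eq_neg_sum_pderiv (F : Type*) [Field F] [CharZero F] (g : ℕ)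
    (lam : Fin g → F) (hlam : Function.Injective lam)
    (f : Polynomial F) (hf : f.degree < (g : WithBot ℕ))
    (n : ℕ) (hn1 : 1 ≤ n) (hng : n ≤ g) :
    f.coeff (g - n) =
      -∑ j : Fin g,
        f.eval (lam j) /
            (Polynomial.derivative
              (∏ l : Fin g, (Polynomial.X - Polynomial.C (lam l)))).eval (lam j) *
          MvPolynomial.eval lam
            (MvPolynomial.pderiv j ((betaP F g).coeff (g - n))) :=
  coeff_eq_neg_sum_pderiv_general F g lam hlam f hf n
end

section
/- For j ≠ k, the partial derivative of β_n'(λ_k) (the derivative of the truncation polynomial β_n(λ) evaluated at the root λ_k) with respect to λ_j satisfies ∂(β_n'(λ_k))/∂λ_j = (1/(λ_j - λ_k)) · (∂(β_n(λ_k))/∂λ_j + β_n'(λ_k)); for j = k, ∂(β_n'(λ_k))/∂λ_k = (1/2) β_n''(λ_k). -/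
/-! Split off the factor of `β` containing `λ_j`: `β = (λ - λ_j) Q` with `Q` free of `λ_j`.
Truncating is taking the polynomial part of `β / λ^(g-n)`, so `β_n = (λ - λ_j) S + r` with `S`
and `r` free of `λ_j`. Since `∂_j λ_j = 1`, the chain rule gives `∂_j (β_n(λ_k)) = -S(λ_k)` and
`∂_j (β_n'(λ_k)) = -S'(λ_k)` for `k ≠ j`, while `β_n'(λ_k) = S(λ_k) + (λ_k - λ_j) S'(λ_k)`. For
`k = j`, both `∂_j (β_n'(λ_j))` and `β_n''(λ_j) / 2` equal `S'(λ_j)`. -/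

open Polynomial

/-- The truncation `β_n(λ) = λ^n + β_1 λ^{n-1} + ⋯ + β_n`. -/
noncomputable def betaTrunc (F : Type*) [Field F] (g n : ℕ) :
    Polynomial (MvPolynomial (Fin g) F) :=
  ∑ m ∈ Finset.range (n + 1),
    Polynomial.C ((betaP F g).coeff (g - m)) * Polynomial.X ^ (n - m)

namespace Polynomial

theorem coeff_divX_iterate {R : Type*} [Semiring R] (p : R[X]) (e i : ℕ) :
    (divX^[e] p).coeff i = p.coeff (i + e) := by
  induction e generalizing i with
  | zero => rfl
  | succ e ih => rw [Function.iterate_succ_apply', coeff_divX, ih, Nat.add_right_comm]; rfl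

theorem divX_iterate_X_sub_C_mul {R : Type*} [CommRing R] (c : R) (q : R[X]) (e : ℕ) :
    divX^[e] ((X - C c) * q) = (X - C c) * divX^[e] q + C ((X * q).coeff e) := by
  ext (_ | i)
  · simp [coeff_divX_iterate, sub_mul, coeff_C_mul]
    ring
  · simp [coeff_divX_iterate, sub_mul, coeff_X_mul, Nat.add_right_comm]

end Polynomial

namespace Derivation

variable {R A : Type*} [CommRing R] [CommRing A] [Algebra R A] (d : Derivation R A A)

theorem apply_coeff_eq_zero {p : A[X]} (hp : d.mapCoeffs p = 0) (i : ℕ) : d (p.coeff i) = 0 := by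
  simpa using congrArg (·.coeff i) hp

theorem apply_eval_eq_of_mapCoeffs_eq_zero {p : A[X]} (hp : d.mapCoeffs p = 0) (x : A) :
    d (p.eval x) = (derivative p).eval x * d x := by
  rw [apply_eval_eq, hp, map_zero, zero_add, smul_eq_mul]

theorem mapCoeffs_derivative_eq_zero {p : A[X]} (hp : d.mapCoeffs p = 0) :
    d.mapCoeffs (derivative p) = 0 := by
  ext i
  simp [coeff_derivative, d.apply_coeff_eq_zero hp]

theorem mapCoeffs_divX_iterate_eq_zero {p : A[X]} (hp : d.mapCoeffs p = 0) (e : ℕ) :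
    d.mapCoeffs (divX^[e] p) = 0 := by
  ext i
  simp [coeff_divX_iterate, d.apply_coeff_eq_zero hp]

theorem mapCoeffs_prod_eq_zero {ι : Type*} (s : Finset ι) (f : ι → A[X])
    (hf : ∀ i ∈ s, d.mapCoeffs (f i) = 0) : d.mapCoeffs (∏ i ∈ s, f i) = 0 := by
  induction s using Finset.cons_induction with
  | empty => simp
  | cons a s _ ih =>
    rw [Finset.forall_mem_cons] at hf
    rw [Finset.prod_cons, leibniz, hf.1, ih hf.2, smul_zero, smul_zero, add_zero]

theorem mapCoeffs_X_sub_C_eq_zero {a : A} (ha : d a = 0) : d.mapCoeffs (X - C a) = 0 := by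
  simp [ha]

end Derivation

section SplitRoot

variable {A : Type*} [CommRing A] {p S : A[X]} {a r : A}

theorem eval_derivative_of_eq_X_sub_C_mul_add_C (hp : p = (X - C a) * S + C r) (b : A) :
    (derivative p).eval b = S.eval b + (b - a) * (derivative S).eval b := by
  subst hp; simp

variable {R : Type*} [CommRing R] [Algebra R A] {d : Derivation R A A}

theorem apply_eval_of_eq_X_sub_C_mul_add_C (hp : p = (X - C a) * S + C r)
    (hS : d.mapCoeffs S = 0) (hr : d r = 0) (ha : d a = 1) {b : A} (hb : d b = 0) :
    d (p.eval b) = -S.eval b := by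
  subst hp
  simp [d.apply_eval_eq_of_mapCoeffs_eq_zero hS, ha, hb, hr]

theorem apply_eval_derivative_of_eq_X_sub_C_mul_add_C (hp : p = (X - C a) * S + C r)
    (hS : d.mapCoeffs S = 0) (ha : d a = 1) {b : A} (hb : d b = 0) :
    d ((derivative p).eval b) = -(derivative S).eval b := by
  rw [eval_derivative_of_eq_X_sub_C_mul_add_C hp]
  simp [d.apply_eval_eq_of_mapCoeffs_eq_zero hS,
    d.apply_eval_eq_of_mapCoeffs_eq_zero (d.mapCoeffs_derivative_eq_zero hS), ha, hb]

theorem sub_mul_apply_eval_derivative_of_eq_X_sub_C_mul_add_C (hp : p = (X - C a) * S + C r)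
    (hS : d.mapCoeffs S = 0) (hr : d r = 0) (ha : d a = 1) {b : A} (hb : d b = 0) :
    (a - b) * d ((derivative p).eval b) = d (p.eval b) + (derivative p).eval b := by
  rw [apply_eval_derivative_of_eq_X_sub_C_mul_add_C hp hS ha hb,
    apply_eval_of_eq_X_sub_C_mul_add_C hp hS hr ha hb, eval_derivative_of_eq_X_sub_C_mul_add_C hp]
  ring

theorem two_mul_apply_eval_derivative_of_eq_X_sub_C_mul_add_C (hp : p = (X - C a) * S + C r)
    (hS : d.mapCoeffs S = 0) (ha : d a = 1) :
    2 * d ((derivative p).eval a) = (derivative (derivative p)).eval a := by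
  rw [eval_derivative_of_eq_X_sub_C_mul_add_C hp]
  subst hp
  simp [d.apply_eval_eq_of_mapCoeffs_eq_zero hS, ha]
  ring

end SplitRoot

section Beta

variable {F : Type*} [Field F] {g : ℕ}

theorem natDegree_betaP : (betaP F g).natDegree = g := by
  rw [betaP, natDegree_prod _ _ fun l _ ↦ X_sub_C_ne_zero _]
  simp

theorem betaTrunc_eq_divX_iterate {n : ℕ} (hng : n ≤ g) :
    betaTrunc F g n = divX^[g - n] (betaP F g) := by
  ext i : 1
  rw [coeff_divX_iterate, betaTrunc, finsetSum_coeff]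
  simp only [coeff_C_mul, coeff_X_pow, mul_ite, mul_one, mul_zero]
  by_cases hi : i ≤ n
  · rw [Finset.sum_eq_single_of_mem (n - i) (by simp)
      fun m hm hmi ↦ if_neg (by simp at hm; omega), if_pos (by omega)]
    congr 1
    omega
  · rw [Finset.sum_eq_zero fun m hm ↦ if_neg (by simp at hm; omega), eq_comm]
    exact coeff_eq_zero_of_natDegree_lt (by rw [natDegree_betaP]; omega)

theorem betaTrunc_eq_X_sub_C_mul_add_C {n : ℕ} (hng : n ≤ g) (j : Fin g) :
    ∃ (S : (MvPolynomial (Fin g) F)[X]) (r : MvPolynomial (Fin g) F),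
      betaTrunc F g n = (X - C (MvPolynomial.X j)) * S + C r ∧
      (MvPolynomial.pderiv j).mapCoeffs S = 0 ∧ MvPolynomial.pderiv j r = 0 := by
  set Q := ∏ l ∈ Finset.univ.erase j, (X - C (MvPolynomial.X l : MvPolynomial (Fin g) F))
  have hQ : (MvPolynomial.pderiv j).mapCoeffs Q = 0 :=
    Derivation.mapCoeffs_prod_eq_zero _ _ _ fun l hl ↦ Derivation.mapCoeffs_X_sub_C_eq_zero _
      (MvPolynomial.pderiv_X_of_ne (Finset.ne_of_mem_erase hl))
  have hXQ : (MvPolynomial.pderiv j).mapCoeffs (X * Q) = 0 := by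
    rw [Derivation.leibniz, hQ, Derivation.mapCoeffs_X, smul_zero, smul_zero, add_zero]
  refine ⟨_, _, ?_, (MvPolynomial.pderiv j).mapCoeffs_divX_iterate_eq_zero hQ (g - n),
    (MvPolynomial.pderiv j).apply_coeff_eq_zero hXQ (g - n)⟩
  rw [betaTrunc_eq_divX_iterate hng, betaP, ← Finset.mul_prod_erase _ _ (Finset.mem_univ j),
    divX_iterate_X_sub_C_mul]

end Beta

theorem pderiv_of_deriv_trunc_at_root_general (F : Type*) [Field F] [CharZero F] (g n : ℕ)
    (hng : n ≤ g) (j k : Fin g) :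
    (j ≠ k →
      (algebraMap (MvPolynomial (Fin g) F) (FractionRing (MvPolynomial (Fin g) F)))
          (MvPolynomial.pderiv j
            ((Polynomial.derivative (betaTrunc F g n)).eval (MvPolynomial.X k))) =
        ((algebraMap (MvPolynomial (Fin g) F) (FractionRing (MvPolynomial (Fin g) F)))
              (MvPolynomial.X j) -
            (algebraMap (MvPolynomial (Fin g) F) (FractionRing (MvPolynomial (Fin g) F)))
              (MvPolynomial.X k))⁻¹ *
          ((algebraMap (MvPolynomial (Fin g) F) (FractionRing (MvPolynomial (Fin g) F)))
              (MvPolynomial.pderiv j ((betaTrunc F g n).eval (MvPolynomial.X k))) +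
            (algebraMap (MvPolynomial (Fin g) F) (FractionRing (MvPolynomial (Fin g) F)))
              ((Polynomial.derivative (betaTrunc F g n)).eval (MvPolynomial.X k)))) ∧
    MvPolynomial.pderiv k
        ((Polynomial.derivative (betaTrunc F g n)).eval (MvPolynomial.X k)) =
      MvPolynomial.C ((1 : F) / 2) *
        (Polynomial.derivative (Polynomial.derivative (betaTrunc F g n))).eval
          (MvPolynomial.X k) := by
  constructor
  · intro hjk
    obtain ⟨S, r, hβ, hS, hr⟩ := betaTrunc_eq_X_sub_C_mul_add_C (F := F) hng j
    have key := sub_mul_apply_eval_derivative_of_eq_X_sub_C_mul_add_C hβ hS hr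
      (MvPolynomial.pderiv_X_self j) (MvPolynomial.pderiv_X_of_ne hjk.symm)
    set φ := algebraMap (MvPolynomial (Fin g) F) (FractionRing (MvPolynomial (Fin g) F))
    have hne : φ (MvPolynomial.X j) - φ (MvPolynomial.X k) ≠ 0 := by
      rw [← map_sub, ne_eq, IsFractionRing.to_map_eq_zero_iff, sub_eq_zero]
      exact fun h ↦ hjk (MvPolynomial.X_injective h)
    rw [eq_inv_mul_iff_mul_eq₀ hne, ← map_sub, ← map_mul, key, map_add]
  · obtain ⟨S, r, hβ, hS, -⟩ := betaTrunc_eq_X_sub_C_mul_add_C (F := F) hng k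
    rw [← two_mul_apply_eval_derivative_of_eq_X_sub_C_mul_add_C hβ hS
      (MvPolynomial.pderiv_X_self k), ← mul_assoc, ← map_ofNat MvPolynomial.C 2, ← map_mul]
    norm_num

/-- for `j ≠ k`,
`∂(β_n'(λ_k))/∂λ_j = (1/(λ_j - λ_k)) (∂(β_n(λ_k))/∂λ_j + β_n'(λ_k))`
(in the field of rational functions of the roots), while for `j = k` the total
derivative satisfies `∂(β_n'(λ_k))/∂λ_k = (1/2) β_n''(λ_k)`. -/
theorem pderiv_of_deriv_trunc_at_root (F : Type*) [Field F] [CharZero F] (g n : ℕ)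
    (hn1 : 1 ≤ n) (hng : n ≤ g) (j k : Fin g) :
    (j ≠ k →
      (algebraMap (MvPolynomial (Fin g) F) (FractionRing (MvPolynomial (Fin g) F)))
          (MvPolynomial.pderiv j
            ((Polynomial.derivative (betaTrunc F g n)).eval (MvPolynomial.X k))) =
        ((algebraMap (MvPolynomial (Fin g) F) (FractionRing (MvPolynomial (Fin g) F)))
              (MvPolynomial.X j) -
            (algebraMap (MvPolynomial (Fin g) F) (FractionRing (MvPolynomial (Fin g) F)))
              (MvPolynomial.X k))⁻¹ *
          ((algebraMap (MvPolynomial (Fin g) F) (FractionRing (MvPolynomial (Fin g) F)))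
              (MvPolynomial.pderiv j ((betaTrunc F g n).eval (MvPolynomial.X k))) +
            (algebraMap (MvPolynomial (Fin g) F) (FractionRing (MvPolynomial (Fin g) F)))
              ((Polynomial.derivative (betaTrunc F g n)).eval (MvPolynomial.X k)))) ∧
    MvPolynomial.pderiv k
        ((Polynomial.derivative (betaTrunc F g n)).eval (MvPolynomial.X k)) =
      MvPolynomial.C ((1 : F) / 2) *
        (Polynomial.derivative (Polynomial.derivative (betaTrunc F g n))).eval
          (MvPolynomial.X k) :=
  pderiv_of_deriv_trunc_at_root_general F g n hng j k
end

section
/- In the Poisson algebra of the Mumford/PI system, the spectral Darboux coordinates are canonical: if λ_1, ..., λ_g are the (assumed distinct) roots of β(λ) and μ_j = α(λ_j), then {λ_j, λ_k} = 0, {μ_j, μ_k} = 0, and {λ_j, μ_k} = δ_{jk}. -/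
/-!
Differentiating `β(λ_j) = 0` along any derivation `D` gives
`β'(λ_j) · D λ_j = -∑ λ_j^(g-i) · D b_i`, and `β'(λ_j) = ∏_{i ≠ j} (λ_j - λ_i)` is a unit, so every
bracket with `λ_j` is determined by brackets with the coefficients of `β`. Since the `b_i` commute,
so do the `λ_j`. The relation `{α(x), β(y)} = (β(x) - β(y)) / (x - y)` then gives
`β'(λ_j) {λ_j, μ_k} = (β(λ_k) - β(λ_j)) / (λ_k - λ_j)`, which vanishes for `j ≠ k` and equals
`β'(λ_j)` for `j = k`. Finally `{μ_j, μ_k} = α'(λ_j) {λ_j, μ_k} - α'(λ_k) {λ_k, μ_j} = 0`.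
-/

open Polynomial Finset

section Polynomials

variable {A : Type*} [CommRing A]

theorem Polynomial.eval_derivative_prod_X_sub_C {ι : Type*} [DecidableEq ι] {s : Finset ι}
    (f : ι → A) {i : ι} (hi : i ∈ s) :
    (derivative (∏ j ∈ s, (X - C (f j)))).eval (f i) = ∏ j ∈ s.erase i, (f i - f j) := by
  rw [derivative_prod_finset, eval_finsetSum, sum_eq_single i]
  · simp [eval_prod]
  · intro j _ hji
    rw [eval_mul, eval_prod, prod_eq_zero (mem_erase.2 ⟨Ne.symm hji, hi⟩) (by simp), zero_mul]
  · exact fun h => absurd hi h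

structure Polynomial.IsSimpleRoot (p : A[X]) (x : A) : Prop where
  isRoot : p.IsRoot x
  isUnit_derivative : IsUnit ((derivative p).eval x)

theorem Polynomial.isSimpleRoot_prod_X_sub_C {ι : Type*} [DecidableEq ι] {s : Finset ι}
    {f : ι → A} (hf : ∀ i j, i ≠ j → IsUnit (f i - f j)) {i : ι} (hi : i ∈ s) :
    (∏ j ∈ s, (X - C (f j))).IsSimpleRoot (f i) where
  isRoot := by simp [IsRoot, eval_prod, prod_eq_zero hi]
  isUnit_derivative := by
    rw [eval_derivative_prod_X_sub_C f hi, IsUnit.prod_iff]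
    exact fun j hj => hf i j (ne_of_mem_erase hj).symm

/-- The paper's `β = b 0 * X ^ g + b 1 * X ^ (g - 1) + ⋯ + b g`. -/
noncomputable def descPoly (g : ℕ) (b : ℕ → A) : A[X] :=
  ∑ i ∈ range (g + 1), C (b i) * X ^ (g - i)

theorem eq_descPoly_of_coeff {p : A[X]} {g : ℕ} {b : ℕ → A} (hp : p.natDegree ≤ g)
    (hb : ∀ i ≤ g, p.coeff (g - i) = b i) : p = descPoly g b := by
  rw [p.as_sum_range' (g + 1) (Nat.lt_succ_of_le hp), ← sum_range_reflect, descPoly]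
  refine sum_congr rfl fun i hi => ?_
  rw [Nat.add_sub_cancel, hb i (Nat.lt_succ_iff.1 (mem_range.1 hi)), C_mul_X_pow_eq_monomial]

theorem prod_X_sub_C_eq_descPoly {g : ℕ} (f : Fin g → A) {b : ℕ → A} (hb0 : b 0 = 1)
    (hb : ∀ k, 1 ≤ k → k ≤ g → b k = (∏ j, (X - C (f j))).coeff (g - k)) :
    ∏ j, (X - C (f j)) = descPoly g b := by
  nontriviality A
  have hdeg : (∏ j, (X - C (f j))).natDegree = g := by simp
  refine eq_descPoly_of_coeff hdeg.le fun k hk => ?_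
  rcases Nat.eq_zero_or_pos k with rfl | hk0
  · have h := (monic_prod_X_sub_C f univ).coeff_natDegree
    rwa [hdeg, ← hb0] at h
  · exact (hb k hk0 hk).symm

variable (g : ℕ) (b : ℕ → A) (x y : A)

@[simp]
theorem eval_descPoly : (descPoly g b).eval x = ∑ i ∈ range (g + 1), b i * x ^ (g - i) := by
  simp [descPoly, eval_finsetSum]

@[simp]
theorem eval_derivative_descPoly :
    (derivative (descPoly g b)).eval x =
      ∑ i ∈ range (g + 1), b i * (g - i : ℕ) * x ^ (g - i - 1) := by
  simp [descPoly, eval_finsetSum, derivative_X_pow, mul_assoc]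

/-- The divided difference `(β(x) - β(y)) / (x - y)`, written without division. -/
def divDiff : A :=
  ∑ i ∈ range (g + 1), b i * ∑ s ∈ range (g - i), x ^ s * y ^ (g - i - 1 - s)

theorem divDiff_mul_sub :
    divDiff g b x y * (x - y) = (descPoly g b).eval x - (descPoly g b).eval y := by
  rw [divDiff, eval_descPoly, eval_descPoly, ← sum_sub_distrib, sum_mul]
  exact sum_congr rfl fun i _ => by rw [mul_assoc, geom_sum₂_mul, mul_sub]

theorem divDiff_self : divDiff g b x x = (derivative (descPoly g b)).eval x := by
  simp only [divDiff, geom_sum₂_self, eval_derivative_descPoly, mul_assoc]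

/-- The coefficientwise form of `{α(x), β(y)} = (β(x) - β(y)) / (x - y)`. -/
theorem sum_Icc_sum_range_eq_divDiff :
    ∑ n ∈ Icc 1 g, ∑ k ∈ range (g + 1),
      (if g + 1 ≤ n + k then b (n + k - (g + 1)) else 0) * x ^ (g - n) * y ^ (g - k) =
      divDiff g b x y := by
  simp only [ite_mul, zero_mul, ← sum_filter, divDiff, mul_sum]
  rw [sum_sigma', sum_sigma']
  refine sum_nbij' (fun p => ⟨p.1 + p.2 - (g + 1), g - p.1⟩) (fun q => ⟨g - q.2, q.1 + q.2 + 1⟩)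
    ?_ ?_ ?_ ?_ ?_
  all_goals
    rintro ⟨n, k⟩ h
    simp only [mem_sigma, mem_filter, mem_Icc, mem_range] at h
  · simp only [mem_sigma, mem_range]; omega
  · simp only [mem_sigma, mem_filter, mem_Icc, mem_range]; omega
  · simp only [Sigma.mk.injEq, heq_eq_eq]; omega
  · simp only [Sigma.mk.injEq, heq_eq_eq]; omega
  · rw [mul_assoc, show g - (n + k - (g + 1)) - 1 - (g - n) = g - k by omega]

end Polynomials

section Derivations

variable {R A M : Type*} [CommSemiring R] [CommSemiring A] [Algebra R A] [AddCommMonoid M]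
  [Module A M] [Module R M]

theorem Derivation.map_sum_mul_pow {ι : Type*} (D : Derivation R A M) (s : Finset ι) (c : ι → A)
    (e : ι → ℕ) (x : A) :
    D (∑ i ∈ s, c i * x ^ e i) =
      (∑ i ∈ s, c i * e i * x ^ (e i - 1)) • D x + ∑ i ∈ s, x ^ e i • D (c i) := by
  rw [map_sum, sum_smul, ← sum_add_distrib]
  refine sum_congr rfl fun i _ => ?_
  rw [Derivation.leibniz, Derivation.leibniz_pow, ← Nat.cast_smul_eq_nsmul A, smul_smul, smul_smul]

theorem Derivation.map_sum_mul_pow_of_map_eq_zero {ι : Type*} (D : Derivation R A M)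
    (s : Finset ι) (c : ι → A) (e : ι → ℕ) {x : A} (hx : D x = 0) :
    D (∑ i ∈ s, c i * x ^ e i) = ∑ i ∈ s, x ^ e i • D (c i) := by
  rw [D.map_sum_mul_pow, hx, smul_zero, zero_add]

end Derivations

section Roots

variable {R A : Type*} [CommSemiring R] [CommRing A] [Algebra R A] {g : ℕ} {b : ℕ → A} {x : A}

theorem Derivation.eval_derivative_descPoly_mul (D : Derivation R A A)
    (hx : (descPoly g b).IsRoot x) :
    (derivative (descPoly g b)).eval x * D x = -∑ i ∈ range (g + 1), x ^ (g - i) * D (b i) := by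
  have h := D.map_sum_mul_pow (range (g + 1)) b (g - ·) x
  rw [← eval_descPoly, hx.eq_zero, map_zero, ← eval_derivative_descPoly] at h
  exact eq_neg_of_add_eq_zero_left h.symm

theorem Derivation.map_simpleRoot_eq_zero (D : Derivation R A A)
    (hx : (descPoly g b).IsSimpleRoot x) (hb : ∀ i, D (b i) = 0) : D x = 0 := by
  rw [← hx.isUnit_derivative.mul_right_eq_zero, D.eval_derivative_descPoly_mul hx.isRoot]
  simp [hb]

end Roots

section Brackets

variable {R A : Type*} [CommSemiring R] [CommRing A] [Algebra R A] (D : A → Derivation R A A)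

theorem bracket_sum_mul_pow (hskew : ∀ x y, D x y = -D y x) {ι : Type*} {s : Finset ι}
    {c : ι → A} {e : ι → ℕ} (hc : ∀ i j, D (c i) (c j) = 0) {x y : A} (hxy : D y x = 0) :
    D (∑ i ∈ s, c i * x ^ e i) (∑ i ∈ s, c i * y ^ e i) =
      (∑ i ∈ s, c i * e i * x ^ (e i - 1)) * D x (∑ i ∈ s, c i * y ^ e i) -
        (∑ i ∈ s, c i * e i * y ^ (e i - 1)) * D y (∑ i ∈ s, c i * x ^ e i) := by
  set α'y := ∑ i ∈ s, c i * e i * y ^ (e i - 1)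
  have hyc : ∀ i, D (∑ j ∈ s, c j * y ^ e j) (c i) = α'y * D y (c i) := by
    intro i
    rw [hskew, D (c i) |>.map_sum_mul_pow, hskew (c i) y, smul_eq_mul]
    simp only [hc, smul_zero, sum_const_zero, add_zero]
    ring
  have hsum : ∑ i ∈ s, x ^ e i • D (∑ j ∈ s, c j * y ^ e j) (c i) =
      α'y * D y (∑ i ∈ s, c i * x ^ e i) := by
    rw [(D y).map_sum_mul_pow_of_map_eq_zero s c e hxy, mul_sum]
    exact sum_congr rfl fun i _ => by rw [hyc, smul_eq_mul]; ring
  rw [hskew, Derivation.map_sum_mul_pow, hsum, hskew _ x, smul_eq_mul]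
  ring

variable {g : ℕ} {a b : ℕ → A} {x y : A}

theorem bracket_simpleRoot_coeff_eq_zero (hskew : ∀ x y, D x y = -D y x)
    (hbb : ∀ i k, D (b i) (b k) = 0) (hx : (descPoly g b).IsSimpleRoot x) (k : ℕ) :
    D x (b k) = 0 := by
  rw [hskew, (D (b k)).map_simpleRoot_eq_zero hx (hbb k), neg_zero]

theorem bracket_simpleRoots_eq_zero (hskew : ∀ x y, D x y = -D y x)
    (hbb : ∀ i k, D (b i) (b k) = 0) (hx : (descPoly g b).IsSimpleRoot x)
    (hy : (descPoly g b).IsSimpleRoot y) : D x y = 0 :=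
  (D x).map_simpleRoot_eq_zero hy (bracket_simpleRoot_coeff_eq_zero D hskew hbb hx)

theorem eval_derivative_descPoly_mul_bracket (hskew : ∀ x y, D x y = -D y x)
    (hx : (descPoly g b).IsRoot x) (z : A) :
    (derivative (descPoly g b)).eval x * D x z = ∑ i ∈ range (g + 1), x ^ (g - i) * D z (b i) := by
  rw [hskew, mul_neg, (D z).eval_derivative_descPoly_mul hx, neg_neg]

theorem eval_derivative_descPoly_mul_bracket_sum (hskew : ∀ x y, D x y = -D y x)
    (hb0 : b 0 = 1) (hbb : ∀ i k, D (b i) (b k) = 0)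
    (hab : ∀ n k, 1 ≤ n → n ≤ g → 1 ≤ k → k ≤ g →
      D (a n) (b k) = if g + 1 ≤ n + k then b (n + k - (g + 1)) else 0)
    (hx : (descPoly g b).IsSimpleRoot x) (hy : (descPoly g b).IsSimpleRoot y) :
    (derivative (descPoly g b)).eval x * D x (∑ n ∈ Icc 1 g, a n * y ^ (g - n)) =
      divDiff g b y x := by
  have hab' : ∀ n ∈ Icc 1 g, ∀ k ∈ range (g + 1),
      D (a n) (b k) = if g + 1 ≤ n + k then b (n + k - (g + 1)) else 0 := by
    intro n hn k hk
    rw [mem_Icc] at hn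
    rw [mem_range] at hk
    rcases Nat.eq_zero_or_pos k with rfl | hk0
    · rw [hb0, Derivation.map_one_eq_zero, if_neg (by omega)]
    · exact hab n k hn.1 hn.2 hk0 (by omega)
  rw [(D x).map_sum_mul_pow_of_map_eq_zero _ _ _ (bracket_simpleRoots_eq_zero D hskew hbb hx hy),
    mul_sum, ← sum_Icc_sum_range_eq_divDiff]
  refine sum_congr rfl fun n hn => ?_
  rw [smul_eq_mul, mul_left_comm, eval_derivative_descPoly_mul_bracket D hskew hx.isRoot, mul_sum]
  refine sum_congr rfl fun k hk => ?_
  rw [hab' n hn k hk]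
  ring

theorem bracket_simpleRoot_sum_self (hskew : ∀ x y, D x y = -D y x)
    (hb0 : b 0 = 1) (hbb : ∀ i k, D (b i) (b k) = 0)
    (hab : ∀ n k, 1 ≤ n → n ≤ g → 1 ≤ k → k ≤ g →
      D (a n) (b k) = if g + 1 ≤ n + k then b (n + k - (g + 1)) else 0)
    (hx : (descPoly g b).IsSimpleRoot x) :
    D x (∑ n ∈ Icc 1 g, a n * x ^ (g - n)) = 1 := by
  refine hx.isUnit_derivative.mul_left_cancel ?_
  rw [eval_derivative_descPoly_mul_bracket_sum D hskew hb0 hbb hab hx hx, mul_one, divDiff_self]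

theorem bracket_simpleRoot_sum_of_isUnit_sub (hskew : ∀ x y, D x y = -D y x)
    (hb0 : b 0 = 1) (hbb : ∀ i k, D (b i) (b k) = 0)
    (hab : ∀ n k, 1 ≤ n → n ≤ g → 1 ≤ k → k ≤ g →
      D (a n) (b k) = if g + 1 ≤ n + k then b (n + k - (g + 1)) else 0)
    (hx : (descPoly g b).IsSimpleRoot x) (hy : (descPoly g b).IsSimpleRoot y)
    (hyx : IsUnit (y - x)) :
    D x (∑ n ∈ Icc 1 g, a n * y ^ (g - n)) = 0 := by
  have hΔ : divDiff g b y x = 0 := by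
    rw [← hyx.mul_left_eq_zero, divDiff_mul_sub, hx.isRoot.eq_zero, hy.isRoot.eq_zero, sub_zero]
  rw [← hx.isUnit_derivative.mul_right_eq_zero,
    eval_derivative_descPoly_mul_bracket_sum D hskew hb0 hbb hab hx hy, hΔ]

end Brackets

def bracketDerivation {A : Type*} [CommRing A] (P : A → A → A)
    (hadd : ∀ x y z, P x (y + z) = P x y + P x z)
    (hleib : ∀ x y z, P x (y * z) = P x y * z + y * P x z) (x : A) : Derivation ℤ A A :=
  Derivation.mk' (AddMonoidHom.mk' (P x) (hadd x)).toIntLinearMap fun y z => by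
    simp only [AddMonoidHom.coe_toIntLinearMap, AddMonoidHom.mk'_apply, smul_eq_mul, hleib]
    ring

theorem spectral_darboux_canonical_general (A : Type*) [CommRing A]
    (P : A → A → A)
    (Paddr : ∀ x y z : A, P x (y + z) = P x y + P x z)
    (Pleibr : ∀ x y z : A, P x (y * z) = P x y * z + y * P x z)
    (Pskew : ∀ x y : A, P x y = -P y x)
    (g : ℕ) (a b : ℕ → A) (hb0 : b 0 = 1)
    (haa : ∀ n m, P (a n) (a m) = 0)
    (hbb : ∀ n m, P (b n) (b m) = 0)
    (hab : ∀ n k, 1 ≤ n → n ≤ g → 1 ≤ k → k ≤ g →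
      P (a n) (b k) = if g + 1 ≤ n + k then b (n + k - (g + 1)) else 0)
    (lam : Fin g → A)
    (hroots : ∀ k, 1 ≤ k → k ≤ g →
      b k = (∏ j : Fin g,
        (Polynomial.X - Polynomial.C (lam j)) : Polynomial A).coeff (g - k))
    (hdist : ∀ j k : Fin g, j ≠ k → IsUnit (lam j - lam k))
    (mu : Fin g → A)
    (hmu : ∀ j, mu j = ∑ n ∈ Finset.Icc 1 g, a n * lam j ^ (g - n)) :
    (∀ j k, P (lam j) (lam k) = 0) ∧
    (∀ j k, P (mu j) (mu k) = 0) ∧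
    (∀ j k : Fin g, P (lam j) (mu k) = if j = k then 1 else 0) := by
  let D := bracketDerivation P Paddr Pleibr
  have hsimple : ∀ j, (descPoly g b).IsSimpleRoot (lam j) := fun j =>
    prod_X_sub_C_eq_descPoly lam hb0 hroots ▸ isSimpleRoot_prod_X_sub_C hdist (mem_univ j)
  have hlamlam : ∀ j k, D (lam j) (lam k) = 0 := fun j k =>
    bracket_simpleRoots_eq_zero D Pskew hbb (hsimple j) (hsimple k)
  have hlammu : ∀ j k, D (lam j) (mu k) = if j = k then 1 else 0 := by
    intro j k
    rw [hmu]
    split_ifs with hjk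
    · subst hjk
      exact bracket_simpleRoot_sum_self D Pskew hb0 hbb hab (hsimple j)
    · exact bracket_simpleRoot_sum_of_isUnit_sub D Pskew hb0 hbb hab (hsimple j) (hsimple k)
        (hdist k j (Ne.symm hjk))
  refine ⟨hlamlam, fun j k => ?_, hlammu⟩
  have hmumu := bracket_sum_mul_pow D Pskew haa (hlamlam k j) (s := Icc 1 g) (e := (g - ·))
  rw [← hmu j, ← hmu k] at hmumu
  change D (mu j) (mu k) = 0
  rw [hmumu, hlammu, hlammu]
  by_cases hjk : j = k
  · subst hjk
    exact sub_self _
  · rw [if_neg hjk, if_neg (Ne.symm hjk), mul_zero, mul_zero, sub_zero]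

/-- the spectral Darboux coordinates are canonical.  In the Poisson
algebra generated by the coefficients `a n` of `α(λ) = a_1 λ^{g-1} + ⋯ + a_g` and
`b n` of `β(λ) = λ^g + b_1 λ^{g-1} + ⋯ + b_g` (with the generalized linear brackets,
written coefficientwise: `{a_n, a_m} = 0`, `{b_n, b_m} = 0`, and
`{a_n, b_k} = b_{n+k-g-1}` if `n + k ≥ g + 1` and `0` otherwise, where `b_0 = 1`),
if `λ_1, …, λ_g` are the roots of `β` — assumed pairwise distinct, in the sense that
the differences are invertible — and `μ_j = α(λ_j)`, then
`{λ_j, λ_k} = 0`, `{μ_j, μ_k} = 0`, `{λ_j, μ_k} = δ_{jk}`. -/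
theorem spectral_darboux_canonical (A : Type*) [CommRing A]
    (P : A → A → A)
    (Paddl : ∀ x y z : A, P (x + y) z = P x z + P y z)
    (Paddr : ∀ x y z : A, P x (y + z) = P x y + P x z)
    (Pleibl : ∀ x y z : A, P (x * y) z = x * P y z + P x z * y)
    (Pleibr : ∀ x y z : A, P x (y * z) = P x y * z + y * P x z)
    (Pskew : ∀ x y : A, P x y = -P y x)
    (g : ℕ) (a b : ℕ → A) (hb0 : b 0 = 1)
    (haa : ∀ n m, P (a n) (a m) = 0)
    (hbb : ∀ n m, P (b n) (b m) = 0)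
    (hab : ∀ n k, 1 ≤ n → n ≤ g → 1 ≤ k → k ≤ g →
      P (a n) (b k) = if g + 1 ≤ n + k then b (n + k - (g + 1)) else 0)
    (lam : Fin g → A)
    (hroots : ∀ k, 1 ≤ k → k ≤ g →
      b k = (∏ j : Fin g,
        (Polynomial.X - Polynomial.C (lam j)) : Polynomial A).coeff (g - k))
    (hdist : ∀ j k : Fin g, j ≠ k → IsUnit (lam j - lam k))
    (mu : Fin g → A)
    (hmu : ∀ j, mu j = ∑ n ∈ Finset.Icc 1 g, a n * lam j ^ (g - n)) :
    (∀ j k, P (lam j) (lam k) = 0) ∧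
    (∀ j k, P (mu j) (mu k) = 0) ∧
    (∀ j k : Fin g, P (lam j) (mu k) = if j = k then 1 else 0) :=
  spectral_darboux_canonical_general A P Paddr Pleibr Pskew g a b hb0 haa hbb hab lam hroots hdist
    mu hmu
end

section
/- If Q = ∂_x² + u and B_{2n+1} = (Q^{n+1/2})_{≥0} is the differential-operator part of the (2n+1)/2 power of Q (as a pseudo-differential operator), then the commutator [B_{2n+1}, Q] is a multiplication operator (order zero), equal to 2 R_{n+1,x}, where R_{n+1} is the coefficient of ∂_x^{-1} in Q^{n+1/2}. -/
section Aux
variable {R : Type*} [CommRing R] [Algebra ℚ R]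

noncomputable def binQ (j : ℤ) (k : ℕ) : ℚ :=
  (∏ i ∈ Finset.range k, ((j : ℚ) - (i : ℚ))) / (Nat.factorial k : ℚ)

lemma binQ_zero (j : ℤ) : binQ j 0 = 1 := by simp [binQ]

lemma binQ_eq_zero {j : ℤ} {k : ℕ} (hj : 0 ≤ j) (hjk : j < (k : ℤ)) : binQ j k = 0 := by
  have hmem : j.toNat ∈ Finset.range k := Finset.mem_range.2 (by omega)
  have hzero : ((j : ℚ) - (j.toNat : ℚ)) = 0 := by
    have h := Int.toNat_of_nonneg hj
    have : ((j.toNat : ℚ)) = (j : ℚ) := by exact_mod_cast congrArg (fun z : ℤ => (z : ℚ)) h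
    rw [this]; ring
  have : (∏ i ∈ Finset.range k, ((j : ℚ) - (i : ℚ))) = 0 :=
    Finset.prod_eq_zero hmem hzero
  simp [binQ, this]

lemma iter_d_zero (d : Derivation ℚ R R) (k : ℕ) : (⇑d)^[k] (0 : R) = 0 :=
  Function.iterate_fixed (map_zero d) k

lemma iter_d_one (d : Derivation ℚ R R) {k : ℕ} (hk : k ≠ 0) : (⇑d)^[k] (1 : R) = 0 := by
  obtain ⟨k, rfl⟩ := Nat.exists_eq_succ_of_ne_zero hk
  rw [Function.iterate_succ_apply, Derivation.map_one_eq_zero, iter_d_zero]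

lemma two_smul_q (x : R) : (2 : ℚ) • x = 2 * x := by
  rw [Algebra.smul_def, map_ofNat]

end Aux

/-- A pseudo-differential operator `∑_j a_j ∂^j` is encoded by its coefficient
function `a : ℤ → R` (support bounded above).  The product is given by the usual
composition rule `∂^j ∘ f = ∑_{k≥0} C(j,k) f^{(k)} ∂^{j-k}`, with the generalized
binomial coefficient `C(j,k) = j(j-1)⋯(j-k+1)/k!` for `j : ℤ`.  Here `d` is the
derivation `∂/∂x` of the coefficient ring. -/
noncomputable def psiMul {R : Type*} [CommRing R] [Algebra ℚ R] (d : R → R)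
    (a b : ℤ → R) : ℤ → R :=
  fun m => ∑ᶠ (j : ℤ), ∑ᶠ (k : ℕ),
    ((∏ i ∈ Finset.range k, ((j : ℚ) - (i : ℚ))) / (Nat.factorial k : ℚ)) •
      (a j * d^[k] (b (m - j + k)))

/-- The coefficients of `Q = ∂² + u`. -/
noncomputable def Qcoef {R : Type*} [CommRing R] (u : R) : ℤ → R :=
  fun j => if j = 2 then 1 else if j = 0 then u else 0

/-- The coefficients of `Q^n`. -/
noncomputable def Qpow {R : Type*} [CommRing R] [Algebra ℚ R] (d : R → R) (u : R) :
    ℕ → (ℤ → R)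
  | 0 => fun j => if j = 0 then 1 else 0
  | n + 1 => psiMul d (Qcoef u) (Qpow d u n)

section Main
variable {R : Type*} [CommRing R] [Algebra ℚ R]

lemma psiMul_eq_binQ (d : R → R) (a b : ℤ → R) (m : ℤ) :
    psiMul d a b m = ∑ᶠ (j : ℤ), ∑ᶠ (k : ℕ), binQ j k • (a j * d^[k] (b (m - j + k))) := rfl

lemma Qcoef_two (u : R) : Qcoef u 2 = 1 := by simp [Qcoef]
lemma Qcoef_zero (u : R) : Qcoef u 0 = u := by simp [Qcoef]
lemma Qcoef_ne {u : R} {j : ℤ} (h2 : j ≠ 2) (h0 : j ≠ 0) : Qcoef u j = 0 := by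
  simp [Qcoef, h2, h0]

/-- Lemma B: left multiplication by `Q`. -/
lemma psiMul_Qleft (d : Derivation ℚ R R) (u : R) (b : ℤ → R) (m : ℤ) :
    psiMul (⇑d) (Qcoef u) b m
      = u * b m + b (m - 2) + 2 * d (b (m - 1)) + (⇑d)^[2] (b m) := by
  rw [psiMul_eq_binQ]
  set F : ℤ → R := fun j => ∑ᶠ (k : ℕ), binQ j k • (Qcoef u j * (⇑d)^[k] (b (m - j + k)))
    with hF
  have hsub : Function.support F ⊆ (({0, 2} : Finset ℤ) : Set ℤ) := by
    intro j hj
    by_contra hmem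
    simp only [Finset.coe_insert, Finset.coe_singleton, Set.mem_insert_iff,
      Set.mem_singleton_iff, not_or] at hmem
    apply hj
    have : F j = 0 := by
      rw [hF]
      apply finsum_eq_zero_of_forall_eq_zero
      intro k
      simp only [Qcoef_ne hmem.2 hmem.1, zero_mul, smul_zero]
    exact this
  rw [finsum_eq_sum_of_support_subset F hsub]
  rw [Finset.sum_pair (by norm_num : (0 : ℤ) ≠ 2)]
  have hF0 : F 0 = u * b m := by
    show (∑ᶠ (k : ℕ), binQ 0 k • (Qcoef u 0 * (⇑d)^[k] (b (m - 0 + (k : ℤ))))) = u * b m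
    rw [finsum_eq_single _ 0 (fun k hk => by
      have hb : binQ 0 k = 0 := binQ_eq_zero le_rfl (by exact_mod_cast Nat.pos_of_ne_zero hk)
      simp [hb])]
    simp [binQ_zero, Qcoef_zero]
  have hF2 : F 2 = b (m - 2) + 2 * d (b (m - 1)) + (⇑d)^[2] (b m) := by
    show (∑ᶠ (k : ℕ), binQ 2 k • (Qcoef u 2 * (⇑d)^[k] (b (m - 2 + (k : ℤ)))))
      = b (m - 2) + 2 * d (b (m - 1)) + (⇑d)^[2] (b m)
    have hs : Function.support (fun k : ℕ => binQ 2 k • (Qcoef u 2 * (⇑d)^[k] (b (m - 2 + (k : ℤ)))))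
        ⊆ ((Finset.range 3 : Finset ℕ) : Set ℕ) := by
      intro k hk
      by_contra hmem
      apply hk
      have hk3 : (3 : ℤ) ≤ (k : ℤ) := by
        simp only [Finset.coe_range, Set.mem_Iio, not_lt] at hmem
        exact_mod_cast hmem
      have hb : binQ 2 k = 0 := binQ_eq_zero (by norm_num) (by omega)
      simp [hb]
    rw [finsum_eq_sum_of_support_subset _ hs]
    have hb0 : binQ 2 0 = 1 := binQ_zero 2
    have hb1 : binQ 2 1 = 2 := by norm_num [binQ, Finset.prod_range_one, Nat.factorial]
    have hb2 : binQ 2 2 = 1 := by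
      norm_num [binQ, Finset.prod_range_succ, Finset.prod_range_one, Nat.factorial]
    have e1 : m - 2 + ((0 : ℕ) : ℤ) = m - 2 := by norm_num
    have e2 : m - 2 + ((1 : ℕ) : ℤ) = m - 1 := by push_cast; ring
    have e3 : m - 2 + ((2 : ℕ) : ℤ) = m := by push_cast; ring
    simp only [Finset.sum_range_succ, Finset.sum_range_one, hb0, hb1, hb2, one_smul,
      Qcoef_two, one_mul, e1, e2, e3, Function.iterate_one, Function.iterate_zero_apply,
      two_smul_q]
    ring
  rw [hF0, hF2]; ring

/-- Lemma A: right multiplication by `Q`. -/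
lemma psiMul_Qright (d : Derivation ℚ R R) (u : R) (a : ℤ → R) (m : ℤ)
    (hfin : (Function.support fun j : ℤ =>
      if m ≤ j then binQ j (j - m).toNat • (a j * (⇑d)^[(j - m).toNat] u) else 0).Finite) :
    psiMul (⇑d) a (Qcoef u) m
      = a (m - 2) + ∑ᶠ (j : ℤ),
          if m ≤ j then binQ j (j - m).toNat • (a j * (⇑d)^[(j - m).toNat] u) else 0 := by
  rw [psiMul_eq_binQ]
  set P : ℤ → R := fun j => if j = m - 2 then a j else 0 with hPdef
  set H : ℤ → R := fun j =>
    if m ≤ j then binQ j (j - m).toNat • (a j * (⇑d)^[(j - m).toNat] u) else 0 with hHdef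
  have key : ∀ j : ℤ,
      (∑ᶠ (k : ℕ), binQ j k • (a j * (⇑d)^[k] (Qcoef u (m - j + (k : ℤ))))) = P j + H j := by
    intro j
    have hker : ∀ k : ℕ, k ≠ 0 → (k : ℤ) ≠ j - m →
        binQ j k • (a j * (⇑d)^[k] (Qcoef u (m - j + (k : ℤ)))) = 0 := by
      intro k hk0 hkjm
      have h0 : m - j + (k : ℤ) ≠ 0 := by omega
      by_cases h2 : m - j + (k : ℤ) = 2
      · rw [h2, Qcoef_two, iter_d_one d hk0, mul_zero, smul_zero]
      · rw [Qcoef_ne h2 h0, iter_d_zero, mul_zero, smul_zero]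
    rcases lt_trichotomy j m with hjm | hjm | hjm
    · -- j < m : only k = 0 contributes
      rw [finsum_eq_single _ 0 (fun k hk => hker k hk (by omega))]
      have hH0 : H j = 0 := by simp only [hHdef]; exact if_neg (by omega)
      rw [hH0, add_zero]; simp only [hPdef]
      by_cases hj2 : j = m - 2
      · have e : m - j + ((0 : ℕ) : ℤ) = 2 := by omega
        rw [e, Qcoef_two, binQ_zero, one_smul, Function.iterate_zero_apply, mul_one, if_pos hj2]
      · have e2 : m - j + ((0 : ℕ) : ℤ) ≠ 2 := by omega
        have e0 : m - j + ((0 : ℕ) : ℤ) ≠ 0 := by omega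
        rw [Qcoef_ne e2 e0, Function.iterate_zero_apply, mul_zero, smul_zero, if_neg hj2]
    · -- j = m : only k = 0 contributes
      subst hjm
      rw [finsum_eq_single _ 0 (fun k hk => hker k hk (by omega))]
      have hP0 : P j = 0 := by simp only [hPdef]; exact if_neg (by omega)
      have hH : H j = binQ j 0 • (a j * (⇑d)^[0] u) := by
        simp only [hHdef]
        have h1 : (j - j).toNat = 0 := by omega
        rw [if_pos le_rfl, h1]
      rw [hP0, zero_add, hH]
      have e : j - j + ((0 : ℕ) : ℤ) = 0 := by omega
      have e' : (j : ℤ) - j + ((0 : ℕ) : ℤ) = 0 := e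
      norm_num [Qcoef_zero]
    · -- m < j : k = 0 and k = (j-m).toNat contribute
      set t : ℕ := (j - m).toNat with htdef
      have ht : (t : ℤ) = j - m := Int.toNat_of_nonneg (by omega)
      have ht0 : t ≠ 0 := by omega
      have hsupp2 : Function.support
          (fun k : ℕ => binQ j k • (a j * (⇑d)^[k] (Qcoef u (m - j + (k : ℤ)))))
          ⊆ (({0, t} : Finset ℕ) : Set ℕ) := by
        intro k hk
        by_contra hmem
        simp only [Finset.coe_insert, Finset.coe_singleton, Set.mem_insert_iff,
          Set.mem_singleton_iff, not_or] at hmem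
        exact hk (hker k hmem.1 (by omega))
      rw [finsum_eq_sum_of_support_subset _ hsupp2,
        Finset.sum_pair (by omega : (0 : ℕ) ≠ t)]
      have hg0 : binQ j 0 • (a j * (⇑d)^[0] (Qcoef u (m - j + ((0 : ℕ) : ℤ)))) = 0 := by
        have e2 : m - j + ((0 : ℕ) : ℤ) ≠ 2 := by omega
        have e0 : m - j + ((0 : ℕ) : ℤ) ≠ 0 := by omega
        rw [Qcoef_ne e2 e0, Function.iterate_zero_apply, mul_zero, smul_zero]
      have hgt : binQ j t • (a j * (⇑d)^[t] (Qcoef u (m - j + (t : ℤ))))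
          = binQ j t • (a j * (⇑d)^[t] u) := by
        have e : m - j + (t : ℤ) = 0 := by omega
        rw [e, Qcoef_zero]
      have hP0 : P j = 0 := by simp only [hPdef]; exact if_neg (by omega)
      have hH : H j = binQ j t • (a j * (⇑d)^[t] u) := by
        simp only [hHdef]; exact if_pos (by omega)
      rw [hg0, zero_add, hgt, hP0, zero_add, hH]
  rw [finsum_congr key]
  have hPfin : (Function.support P).Finite := by
    apply Set.Finite.subset (Set.finite_singleton (m - 2))
    intro x hx
    by_contra h
    simp only [Set.mem_singleton_iff] at h
    exact hx (by simp only [hPdef]; exact if_neg h)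
  rw [finsum_add_distrib hPfin hfin]
  congr 1
  rw [finsum_eq_single P (m - 2) (fun x hx => by simp only [hPdef]; exact if_neg hx)]
  simp [hPdef]
end Main

/-- if `S = Q^{n+1/2}` (i.e. `S` is a monic pseudo-differential operator
of order `2n+1` commuting with `Q = ∂² + u` and satisfying `S² = Q^{2n+1}`) and
`B_{2n+1} = (S)_{≥0}` is its differential-operator part, then `[B_{2n+1}, Q]` is a
multiplication operator, equal to `2 R_{n+1,x}` where `R_{n+1} = S(-1)` is the
coefficient of `∂^{-1}` in `S`. -/
theorem commutator_B_Q (R : Type*) [CommRing R] [Algebra ℚ R]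
    (d : Derivation ℚ R R) (u : R) (n : ℕ) (S : ℤ → R)
    (hlead : S (2 * n + 1) = 1)
    (hsupp : ∀ j : ℤ, (2 * n + 1 : ℤ) < j → S j = 0)
    (hsq : psiMul (⇑d) S S = Qpow (⇑d) u (2 * n + 1))
    (hcomm : psiMul (⇑d) S (Qcoef u) = psiMul (⇑d) (Qcoef u) S) :
    ∀ j : ℤ,
      psiMul (⇑d) (fun i => if 0 ≤ i then S i else 0) (Qcoef u) j -
          psiMul (⇑d) (Qcoef u) (fun i => if 0 ≤ i then S i else 0) j =
        if j = 0 then 2 * d (S (-1)) else 0 := by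

  intro m
  set Sp : ℤ → R := fun i => if 0 ≤ i then S i else 0 with hSp
  have hfinS : (Function.support fun j : ℤ =>
      if m ≤ j then binQ j (j - m).toNat • (S j * (⇑d)^[(j - m).toNat] u) else 0).Finite := by
    apply Set.Finite.subset (Set.finite_Icc m (2 * (n : ℤ) + 1))
    intro j hj
    simp only [Function.mem_support] at hj
    by_contra hmem
    apply hj
    simp only [Set.mem_Icc, not_and, not_le] at hmem
    by_cases h1 : m ≤ j
    · rw [if_pos h1, hsupp j (hmem h1), zero_mul, smul_zero]
    · rw [if_neg h1]
  have hfinSp : (Function.support fun j : ℤ =>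
      if m ≤ j then binQ j (j - m).toNat • (Sp j * (⇑d)^[(j - m).toNat] u) else 0).Finite := by
    apply Set.Finite.subset (Set.finite_Icc m (2 * (n : ℤ) + 1))
    intro j hj
    simp only [Function.mem_support] at hj
    by_contra hmem
    apply hj
    simp only [Set.mem_Icc, not_and, not_le] at hmem
    by_cases h1 : m ≤ j
    · have hSj : Sp j = 0 := by
        simp only [hSp]
        rw [hsupp j (hmem h1)]
        simp
      rw [if_pos h1, hSj, zero_mul, smul_zero]
    · rw [if_neg h1]
  have hA_S := psiMul_Qright d u S m hfinS
  have hA_Sp := psiMul_Qright d u Sp m hfinSp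
  have hB_S := psiMul_Qleft d u S m
  have hB_Sp := psiMul_Qleft d u Sp m
  have h := congrFun hcomm m
  rw [hA_S, hB_S] at h
  rw [hA_Sp, hB_Sp]
  rcases lt_or_ge m 0 with hm | hm
  · -- negative order: everything vanishes
    have hH0 : ∀ j : ℤ,
        (if m ≤ j then binQ j (j - m).toNat • (Sp j * (⇑d)^[(j - m).toNat] u) else 0) = 0 := by
      intro j
      by_cases h1 : m ≤ j
      · by_cases h2 : 0 ≤ j
        · have ht : ((j - m).toNat : ℤ) = j - m := Int.toNat_of_nonneg (by omega)
          have hb : binQ j (j - m).toNat = 0 := binQ_eq_zero h2 (by omega)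
          rw [if_pos h1, hb, zero_smul]
        · have hSj : Sp j = 0 := by simp only [hSp]; exact if_neg h2
          rw [if_pos h1, hSj, zero_mul, smul_zero]
      · rw [if_neg h1]
    rw [finsum_eq_zero_of_forall_eq_zero hH0]
    have e1 : Sp m = 0 := by simp only [hSp]; exact if_neg (by omega)
    have e2 : Sp (m - 1) = 0 := by simp only [hSp]; exact if_neg (by omega)
    rw [e1, e2, map_zero, if_neg (by omega : ¬ m = 0), iter_d_zero]
    ring
  · -- nonnegative order
    have hfun : ∀ j : ℤ,
        (if m ≤ j then binQ j (j - m).toNat • (Sp j * (⇑d)^[(j - m).toNat] u) else 0)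
          = (if m ≤ j then binQ j (j - m).toNat • (S j * (⇑d)^[(j - m).toNat] u) else 0) := by
      intro j
      by_cases h1 : m ≤ j
      · have hSj : Sp j = S j := by simp only [hSp]; exact if_pos (by omega)
        rw [if_pos h1, if_pos h1, hSj]
      · rw [if_neg h1, if_neg h1]
    rw [finsum_congr hfun]
    rcases eq_or_lt_of_le hm with hm0 | hm0
    · -- m = 0
      have hm0' : m = 0 := hm0.symm
      subst hm0'
      have e1 : Sp 0 = S 0 := by simp only [hSp]; exact if_pos le_rfl
      have e2 : Sp (0 - 1) = 0 := by simp only [hSp]; exact if_neg (by omega)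
      have e3 : (0 : ℤ) - 1 = -1 := by norm_num
      rw [e3] at h
      rw [e1, e2, map_zero, if_pos rfl]
      linear_combination h
    · -- 0 < m
      have e1 : Sp m = S m := by simp only [hSp]; exact if_pos (by omega)
      have e2 : Sp (m - 1) = S (m - 1) := by simp only [hSp]; exact if_pos (by omega)
      rw [e1, e2, if_neg (by omega : ¬ m = 0)]
      linear_combination h
end
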